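/- For any real p×q matrix X, the matrix [[√(I + XXᵀ), X], [Xᵀ, √(I + XᵀX)]] equals diag(U, V) · [[Ch, 0, Sh], [0, I_{p−q}, 0], [Sh, 0, Ch]] · diag(U, V)ᵀ for some U ∈ O(p), V ∈ O(q), and diagonal Ch = diag(cosh θ_l), Sh = diag(sinh θ_l); in particular X = U' Sh' V'ᵀ exhibits the singular value decomposition of X (with appropriate rectangular padding of Sh). -/

import Mathlib

/-!
Take a singular value decomposition `X = U [Σ; 0] Vᵀ`: diagonalize `XᵀX = V Σ² Vᵀ`; the columns
of `XV` are then orthogonal with norms `σₗ`, and normalizing the nonzero ones and extending them to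
an orthonormal basis gives `U`. Writing `Σ = sinh Θ`, the identity `cosh² = 1 + sinh²` shows that
`1 + XXᵀ` and `1 + XᵀX` are the squares of `U diag(cosh Θ, 1) Uᵀ` and `V cosh Θ Vᵀ`. These are
positive semidefinite, so by uniqueness of positive square roots they are `R₁` and `R₂`.
-/

open Matrix

namespace Matrix

variable {n m : Type*} [Fintype n] [Fintype m] [DecidableEq n] [DecidableEq m]

theorem PosSemidef.eq_of_mul_self_eq {A B : Matrix n n ℝ} (hA : A.PosSemidef)
    (hB : B.PosSemidef) (h : A * A = B * B) : A = B := by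
  open scoped MatrixOrder in
  rw [← CFC.sqrt_mul_self A hA.nonneg, h, CFC.sqrt_mul_self B hB.nonneg]

theorem PosSemidef.eq_mul_mul_transpose_of_mul_self_eq {R C U : Matrix n n ℝ}
    (hR : R.PosSemidef) (hC : C.PosSemidef) (hU : Uᵀ * U = 1)
    (h : R * R = U * (C * C) * Uᵀ) : R = U * C * Uᵀ := by
  refine hR.eq_of_mul_self_eq (by simpa using hC.mul_mul_conjTranspose_same U) ?_
  calc R * R = U * C * (Uᵀ * U) * (C * Uᵀ) := by
        rw [h, hU, Matrix.mul_one]; simp only [Matrix.mul_assoc]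
    _ = U * C * Uᵀ * (U * C * Uᵀ) := by simp only [Matrix.mul_assoc]

theorem one_add_transpose_mul_self_mul_mul_transpose {U : Matrix m m ℝ} {V : Matrix n n ℝ}
    (hU : Uᵀ * U = 1) (hV : V * Vᵀ = 1) (A : Matrix m n ℝ) :
    1 + (U * A * Vᵀ)ᵀ * (U * A * Vᵀ) = V * (1 + Aᵀ * A) * Vᵀ := by
  calc 1 + (U * A * Vᵀ)ᵀ * (U * A * Vᵀ) = V * Vᵀ + V * Aᵀ * (Uᵀ * U) * A * Vᵀ := by
        simp only [hV, transpose_mul, transpose_transpose, Matrix.mul_assoc]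
    _ = V * (1 + Aᵀ * A) * Vᵀ := by
        rw [hU, Matrix.mul_add, Matrix.add_mul, Matrix.mul_one, Matrix.mul_one]
        simp only [Matrix.mul_assoc]

theorem one_add_mul_transpose_self_mul_mul_transpose {U : Matrix m m ℝ} {V : Matrix n n ℝ}
    (hU : U * Uᵀ = 1) (hV : Vᵀ * V = 1) (A : Matrix m n ℝ) :
    1 + (U * A * Vᵀ) * (U * A * Vᵀ)ᵀ = U * (1 + A * Aᵀ) * Uᵀ := by
  simpa [Matrix.mul_assoc] using one_add_transpose_mul_self_mul_mul_transpose hV hU Aᵀ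

omit [DecidableEq n] [DecidableEq m] in
theorem fromBlocks_mul_fromBlocks_mul_transpose (U : Matrix m m ℝ) (V : Matrix n n ℝ)
    (A : Matrix m m ℝ) (B : Matrix m n ℝ) (C : Matrix n m ℝ) (D : Matrix n n ℝ) :
    fromBlocks U 0 0 V * fromBlocks A B C D * (fromBlocks U 0 0 V)ᵀ =
      fromBlocks (U * A * Uᵀ) (U * B * Vᵀ) (V * C * Uᵀ) (V * D * Vᵀ) := by
  simp [fromBlocks_transpose, fromBlocks_multiply]

theorem exists_orthogonal_eq_mul_fromRows_diagonal {W : Matrix (n ⊕ m) n ℝ} {σ : n → ℝ}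
    (hW : Wᵀ * W = diagonal fun l => σ l ^ 2) :
    ∃ U : Matrix (n ⊕ m) (n ⊕ m) ℝ,
      Uᵀ * U = 1 ∧ W = U * fromRows (diagonal σ) (0 : Matrix m n ℝ) := by
  let col (l : n) : EuclideanSpace ℝ (n ⊕ m) := WithLp.toLp 2 fun r => W r l
  have inner_col (l k : n) : inner ℝ (col l) (col k) = if l = k then σ l ^ 2 else 0 := by
    have := congrFun (congrFun hW l) k
    simp only [mul_apply, transpose_apply, diagonal_apply] at this
    simp only [PiLp.inner_apply, col, RCLike.inner_apply, conj_trivial, ← this, mul_comm]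
  let v : n ⊕ m → EuclideanSpace ℝ (n ⊕ m) := Sum.elim (fun l => (σ l)⁻¹ • col l) 0
  have hv : Orthonormal ℝ ((Sum.inl '' {l | σ l ≠ 0}).domRestrict v) := by
    rw [orthonormal_iff_ite]
    rintro ⟨_, l, hl, rfl⟩ ⟨_, k, -, rfl⟩
    simp only [Set.domRestrict_apply, v, Sum.elim_inl, inner_smul_left, inner_smul_right,
      inner_col, conj_trivial]
    rcases eq_or_ne l k with rfl | h
    · simp only [if_true]; field_simp [show σ l ≠ 0 from hl]
    · simp [h, Subtype.ext_iff]
  obtain ⟨b, hb⟩ := hv.exists_orthonormalBasis_extension_of_card_eq (by simp)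
  refine ⟨(EuclideanSpace.basisFun _ ℝ).toBasis.toMatrix b, ?_, ?_⟩
  · simpa [star_eq_conjTranspose] using mem_unitaryGroup_iff'.mp
      ((EuclideanSpace.basisFun _ ℝ).toMatrix_orthonormalBasis_mem_unitary b)
  · ext r l
    simp only [mul_apply, Fintype.sum_sum_type, fromRows_apply_inl, fromRows_apply_inr,
      diagonal_apply, Matrix.zero_apply, mul_ite, mul_zero, Finset.sum_ite_eq', Finset.mem_univ,
      if_true, Finset.sum_const_zero, add_zero, Module.Basis.toMatrix_apply,
      OrthonormalBasis.coe_toBasis_repr_apply, EuclideanSpace.basisFun_repr]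
    by_cases hσ : σ l = 0
    · have : col l = 0 := inner_self_eq_zero.mp (by rw [inner_col, if_pos rfl, hσ]; ring)
      simpa [hσ, col] using congr($this r)
    · rw [hb _ ⟨l, hσ, rfl⟩]
      simp only [v, col, Sum.elim_inl, PiLp.smul_apply, smul_eq_mul]
      field_simp

theorem exists_svd (X : Matrix (n ⊕ m) n ℝ) :
    ∃ (U : Matrix (n ⊕ m) (n ⊕ m) ℝ) (V : Matrix n n ℝ) (σ : n → ℝ),
      Uᵀ * U = 1 ∧ Vᵀ * V = 1 ∧ (∀ l, 0 ≤ σ l) ∧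
        X = U * fromRows (diagonal σ) (0 : Matrix m n ℝ) * Vᵀ := by
  have hXX : (Xᵀ * X).PosSemidef := by simpa using posSemidef_conjTranspose_mul_self X
  let V : Matrix n n ℝ := hXX.1.eigenvectorUnitary
  have hV : Vᵀ * V = 1 := by
    simpa [star_eq_conjTranspose] using mem_unitaryGroup_iff'.mp hXX.1.eigenvectorUnitary.2
  have hspec : Vᵀ * (Xᵀ * X) * V = diagonal hXX.1.eigenvalues := by
    simpa [Unitary.conjStarAlgAut_apply, star_eq_conjTranspose] using
      hXX.1.conjStarAlgAut_star_eigenvectorUnitary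
  let σ (l : n) : ℝ := √(hXX.1.eigenvalues l)
  obtain ⟨U, hU, hW⟩ := exists_orthogonal_eq_mul_fromRows_diagonal (m := m) (W := X * V) (σ := σ)
    (by simp only [σ, transpose_mul, Real.sq_sqrt (hXX.eigenvalues_nonneg _), ← hspec,
      Matrix.mul_assoc])
  refine ⟨U, V, σ, hU, hV, fun l => Real.sqrt_nonneg _, ?_⟩
  rw [← hW, Matrix.mul_assoc, mul_eq_one_comm.mp hV, Matrix.mul_one]

section Hyperbolic

open Real

theorem one_add_diagonal_sinh_mul_self (θ : n → ℝ) :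
    1 + diagonal (fun l => sinh (θ l)) * diagonal (fun l => sinh (θ l)) =
      diagonal (fun l => cosh (θ l)) * diagonal (fun l => cosh (θ l)) := by
  rw [diagonal_mul_diagonal, diagonal_mul_diagonal, ← diagonal_one, diagonal_add]
  congr 1; ext l; rw [← sq, ← sq, cosh_sq, add_comm]

omit [DecidableEq m] in
theorem one_add_transpose_mul_self_fromRows_sinh (θ : n → ℝ) :
    1 + (fromRows (diagonal fun l => sinh (θ l)) (0 : Matrix m n ℝ))ᵀ *
        fromRows (diagonal fun l => sinh (θ l)) (0 : Matrix m n ℝ) =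
      diagonal (fun l => cosh (θ l)) * diagonal (fun l => cosh (θ l)) := by
  rw [transpose_fromRows, fromCols_mul_fromRows, diagonal_transpose, Matrix.mul_zero, add_zero,
    one_add_diagonal_sinh_mul_self]

theorem one_add_fromRows_sinh_mul_transpose (θ : n → ℝ) :
    1 + fromRows (diagonal fun l => sinh (θ l)) (0 : Matrix m n ℝ) *
        (fromRows (diagonal fun l => sinh (θ l)) (0 : Matrix m n ℝ))ᵀ =
      fromBlocks (diagonal fun l => cosh (θ l)) 0 0 1 *
        fromBlocks (diagonal fun l => cosh (θ l)) 0 0 1 := by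
  rw [transpose_fromRows, fromRows_mul_fromCols, fromBlocks_multiply, ← fromBlocks_one,
    fromBlocks_add, diagonal_transpose, one_add_diagonal_sinh_mul_self]
  simp

omit [Fintype n] [Fintype m] in
theorem posSemidef_fromBlocks_diagonal_cosh (θ : n → ℝ) :
    (fromBlocks (diagonal fun l => cosh (θ l)) 0 0 (1 : Matrix m m ℝ)).PosSemidef := by
  rw [← diagonal_one, fromBlocks_diagonal]
  exact posSemidef_diagonal_iff.mpr fun | .inl _ => (cosh_pos _).le | .inr _ => zero_le_one

end Hyperbolic

end Matrix

theorem hcsd_folding_svd (p q : ℕ)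
    (X : Matrix (Fin q ⊕ Fin (p - q)) (Fin q) ℝ)
    (R₁ : Matrix (Fin q ⊕ Fin (p - q)) (Fin q ⊕ Fin (p - q)) ℝ)
    (R₂ : Matrix (Fin q) (Fin q) ℝ)
    (hR₁ : R₁.PosDef) (hR₁sq : R₁ * R₁ = 1 + X * Xᵀ)
    (hR₂ : R₂.PosDef) (hR₂sq : R₂ * R₂ = 1 + Xᵀ * X) :
    ∃ (U : Matrix (Fin q ⊕ Fin (p - q)) (Fin q ⊕ Fin (p - q)) ℝ)
      (V : Matrix (Fin q) (Fin q) ℝ) (θ : Fin q → ℝ),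
      Uᵀ * U = 1 ∧ Vᵀ * V = 1 ∧
      Matrix.fromBlocks R₁ X Xᵀ R₂ =
        Matrix.fromBlocks U 0 0 V *
          Matrix.fromBlocks
            (Matrix.fromBlocks (Matrix.diagonal fun l => Real.cosh (θ l)) 0 0 1)
            (Matrix.of fun i j => match i with
              | Sum.inl i' => if i' = j then Real.sinh (θ j) else 0
              | Sum.inr _ => 0)
            (Matrix.of fun i j => match j with
              | Sum.inl j' => if i = j' then Real.sinh (θ i) else 0
              | Sum.inr _ => 0)
            (Matrix.diagonal fun l => Real.cosh (θ l)) *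
          (Matrix.fromBlocks U 0 0 V)ᵀ ∧
      X = U * (Matrix.of fun (i : Fin q ⊕ Fin (p - q)) (j : Fin q) => match i with
              | Sum.inl i' => if i' = j then Real.sinh (θ j) else 0
              | Sum.inr _ => 0) * Vᵀ := by
  obtain ⟨U, V, σ, hU, hV, -, hX⟩ := exists_svd X
  let θ (l : Fin q) : ℝ := Real.arsinh (σ l)
  let S : Matrix (Fin q ⊕ Fin (p - q)) (Fin q) ℝ :=
    fromRows (diagonal fun l => Real.sinh (θ l)) 0
  have hS : (of fun i j => match i with
      | Sum.inl i' => if i' = j then Real.sinh (θ j) else 0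
      | Sum.inr _ => 0) = S := by
    ext (i | i) j
    · rcases eq_or_ne i j with rfl | h
      · simp [S]
      · simp [S, h]
    · simp [S]
  have hSt : (of fun i j => match j with
      | Sum.inl j' => if i = j' then Real.sinh (θ i) else 0
      | Sum.inr _ => 0) = Sᵀ := by
    rw [← hS]; ext i (j | j) <;> simp [eq_comm]
  have hXS : X = U * S * Vᵀ := by simpa [S, θ] using hX
  refine ⟨U, V, θ, hU, hV, ?_, hS ▸ hXS⟩
  rw [hS, hSt, fromBlocks_mul_fromBlocks_mul_transpose, ← hXS]
  congr 1
  · refine hR₁.posSemidef.eq_mul_mul_transpose_of_mul_self_eq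
      (posSemidef_fromBlocks_diagonal_cosh θ) hU ?_
    rw [hR₁sq, hXS, one_add_mul_transpose_self_mul_mul_transpose (mul_eq_one_comm.mp hU) hV,
      one_add_fromRows_sinh_mul_transpose]
  · rw [hXS]; simp [Matrix.mul_assoc]
  · refine hR₂.posSemidef.eq_mul_mul_transpose_of_mul_self_eq
      (posSemidef_diagonal_iff.mpr fun l => (Real.cosh_pos _).le) hV ?_
    rw [hR₂sq, hXS, one_add_transpose_mul_self_mul_mul_transpose hU (mul_eq_one_comm.mp hV),
      one_add_transpose_mul_self_fromRows_sinh]
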